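/- arXiv:1504.07959 — 6 statements merged into one kernel-verified Lean document; each statement's English description precedes it below -/
import Mathlib

section
/- For every directed graph G, every D ≥ 1, every pair of nodes x and y, and every set of nodes Q with P(x, y, D, G) ⊆ Q ⊆ V, the path union computed in the induced subgraph equals the path union in G: P(x, y, D, G[Q]) = P(x, y, D, G). -/
open scoped ENNReal

namespace Paper

variable {V : Type*}

/-- Total weight of a path given as a list of vertices. -/
noncomputable def pathWeight (w : V → V → ℝ≥0∞) : List V → ℝ≥0∞
  | [] => 0
  | [_] => 0
  | a :: b :: rest => w a b + pathWeight w (b :: rest)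

/-- `p` is a path (walk) from `x` to `y`; non-edges have weight `⊤`. -/
def IsPath (x y : V) (p : List V) : Prop :=
  p ≠ [] ∧ p.head? = some x ∧ p.getLast? = some y

/-- Shortest-path distance from `x` to `y` (`⊤` if unreachable). -/
noncomputable def gdist (w : V → V → ℝ≥0∞) (x y : V) : ℝ≥0∞ :=
  sInf {c | ∃ p, IsPath x y p ∧ pathWeight w p = c}

/-- The path union `P(x, y, D, G)`: all nodes on some `x`-`y` path of weight at most `D`. -/
def pathUnion (w : V → V → ℝ≥0∞) (x y : V) (D : ℝ≥0∞) : Set V :=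
  {v | ∃ p, IsPath x y p ∧ pathWeight w p ≤ D ∧ v ∈ p}

open Classical in
/-- Weight function of the subgraph induced by the node set `Q`. -/
noncomputable def inducedW (w : V → V → ℝ≥0∞) (Q : Set V) : V → V → ℝ≥0∞ :=
  fun u v => if u ∈ Q ∧ v ∈ Q then w u v else ⊤

/-- `h`-hop distance: minimum weight over paths with at most `h` edges. -/
noncomputable def hopDist (w : V → V → ℝ≥0∞) (h : ℕ) (x y : V) : ℝ≥0∞ :=
  sInf {c | ∃ p, IsPath x y p ∧ p.length ≤ h + 1 ∧ pathWeight w p = c}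

/-- The `h`-hop path union `P^h(x, y, D, G)`. -/
def hopPathUnion (w : V → V → ℝ≥0∞) (h : ℕ) (x y : V) (D : ℝ≥0∞) : Set V :=
  {v | ∃ p, IsPath x y p ∧ p.length ≤ h + 1 ∧ pathWeight w p ≤ D ∧ v ∈ p}

end Paper

lemma pathWeight_le_induced {V : Type*} (w : V → V → ℝ≥0∞) (Q : Set V) :
    ∀ p : List V, Paper.pathWeight w p ≤ Paper.pathWeight (Paper.inducedW w Q) p
  | [] => le_rfl
  | [_] => le_rfl
  | a :: b :: rest => by
    simp only [Paper.pathWeight]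
    refine add_le_add ?_ (pathWeight_le_induced w Q (b :: rest))
    unfold Paper.inducedW
    split <;> simp

lemma pathWeight_induced_eq {V : Type*} (w : V → V → ℝ≥0∞) (Q : Set V) :
    ∀ p : List V, (∀ v ∈ p, v ∈ Q) →
      Paper.pathWeight (Paper.inducedW w Q) p = Paper.pathWeight w p
  | [], _ => rfl
  | [_], _ => rfl
  | a :: b :: rest, h => by
    simp only [Paper.pathWeight]
    rw [pathWeight_induced_eq w Q (b :: rest) (fun v hv => h v (List.mem_cons_of_mem _ hv))]
    unfold Paper.inducedW
    rw [if_pos ⟨h a (by simp), h b (by simp)⟩]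

/-- if `P(x, y, D, G) ⊆ Q`, then the path union computed in the
induced subgraph `G[Q]` equals the path union in `G`. -/
theorem stmt2 {V : Type*} (w : V → V → ℝ≥0∞) (D : ℝ≥0∞) (hD : 1 ≤ D) (x y : V)
    (Q : Set V) (hQ : Paper.pathUnion w x y D ⊆ Q) :
    Paper.pathUnion (Paper.inducedW w Q) x y D = Paper.pathUnion w x y D := by
  ext v
  constructor
  · rintro ⟨p, hp, hw, hv⟩
    exact ⟨p, hp, le_trans (pathWeight_le_induced w Q p) hw, hv⟩
  · rintro ⟨p, hp, hw, hv⟩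
    refine ⟨p, hp, ?_, hv⟩
    rw [pathWeight_induced_eq w Q p (fun u hu => hQ ⟨p, hp, hw, hu⟩)]
    exact hw
end

section
/- Let a ≥ 1, let T be a finite set of size t, and let S_1, ..., S_k be subsets of T each of size at least q. Let U ⊆ T be a random subset obtained by including each element of T independently with probability p = min(x/q, 1) where x = a·ln(k·t) + 1. Then with probability at least 1 − 1/t^a, both of the following hold: (1) every S_i intersects U, and (2) |U| ≤ 3·x·t/q. -/
open scoped ENNReal

open MeasureTheory

lemma sum_prod_bool' {T : Type*} [Fintype T] [DecidableEq T] (w : Bool → ℝ≥0∞) :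
    ∑ f : T → Bool, ∏ e : T, w (f e) = (w true + w false) ^ Fintype.card T := by
  classical
  rw [← Fintype.piFinset_univ,
    ← Finset.prod_univ_sum (fun _ : T => (Finset.univ : Finset Bool)) (fun _ b => w b)]
  simp [Finset.prod_const, add_comm]

lemma meas_le_sum' {T : Type*} [Fintype T] [DecidableEq T] (μ : Measure (T → Bool))
    (s : Set (T → Bool)) : μ s ≤ ∑ f ∈ s.toFinite.toFinset, μ {f} := by
  have h2 := measure_biUnion_finset_le (μ := μ) s.toFinite.toFinset
      (fun f => ({f} : Set (T → Bool)))
  have : s = ⋃ f ∈ s.toFinite.toFinset, {f} := by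
    ext g; simp [Set.Finite.mem_toFinset]
  conv_lhs => rw [this]
  exact h2

set_option maxHeartbeats 1000000 in
/-- hitting set lemma: sampling each element of `T` independently with
probability `p = min(x/q, 1)`, `x = a·ln(k·t) + 1`, with probability at least `1 − 1/t^a`
every set `S_i` is hit and the sample has size at most `3·x·t/q`. -/
theorem stmt3 {T : Type*} [Fintype T] [DecidableEq T]
    (t k q : ℕ) (ht : t = Fintype.card T) (ht1 : 1 ≤ t) (hk : 1 ≤ k) (hq : 1 ≤ q)
    (S : Fin k → Finset T) (hS : ∀ i, q ≤ (S i).card)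
    (a : ℝ) (ha : 1 ≤ a)
    (x : ℝ) (hx : x = a * Real.log (k * t) + 1)
    (p : ℝ≥0∞) (hp : p = min (ENNReal.ofReal (x / q)) 1) (hp1 : p ≤ 1)
    (μ : Measure (T → Bool))
    (hμ : μ = Measure.pi fun _ : T => (PMF.bernoulli p.toNNReal (by simpa using ENNReal.toNNReal_mono ENNReal.one_ne_top hp1)).toMeasure) :
    1 - 1 / (t : ℝ≥0∞) ^ a ≤
      μ {f | (∀ i, ∃ e ∈ S i, f e = true) ∧
             ((Finset.univ.filter fun e => f e = true).card : ℝ) ≤ 3 * x * t / q} := by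
  classical
  subst hμ
  set ν := (PMF.bernoulli p.toNNReal (by simpa using ENNReal.toNNReal_mono ENNReal.one_ne_top hp1)).toMeasure with hν
  have hνt : ν {true} = p := by
    rw [hν, PMF.toMeasure_apply_singleton _ _ (measurableSet_singleton _)]
    exact (PMF.bernoulli_apply _ _).trans (by simp [ENNReal.coe_toNNReal (ne_top_of_le_ne_top ENNReal.one_ne_top hp1)])
  have hνf : ν {false} = 1 - p := by
    rw [hν, PMF.toMeasure_apply_singleton _ _ (measurableSet_singleton _)]
    exact (PMF.bernoulli_apply _ _).trans (by simp [ENNReal.coe_sub, ENNReal.coe_toNNReal (ne_top_of_le_ne_top ENNReal.one_ne_top hp1)])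
  have hsingle : ∀ f : T → Bool, (Measure.pi fun _ : T => ν) {f} = ∏ e : T, ν {f e} := by
    intro f
    rw [← Set.univ_pi_singleton f, Measure.pi_pi]
  -- basic real facts
  have hq0 : (0:ℝ) < q := by exact_mod_cast hq
  have ht0 : (0:ℝ) < t := by exact_mod_cast ht1
  have hk1 : (1:ℝ) ≤ k := by exact_mod_cast hk
  have ht1' : (1:ℝ) ≤ t := by exact_mod_cast ht1
  have hkt1 : (1:ℝ) ≤ (k:ℝ) * t := by nlinarith
  have hx1 : (1:ℝ) ≤ x := by
    have hlog : 0 ≤ Real.log ((k:ℝ) * t) := Real.log_nonneg hkt1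
    rw [hx]
    push_cast
    nlinarith
  have htq : (q:ℝ) ≤ t := by
    have h1 : q ≤ (S ⟨0, hk⟩).card := hS _
    have h2 : (S ⟨0, hk⟩).card ≤ Fintype.card T := Finset.card_le_univ _
    have h3 : q ≤ t := by rw [ht]; exact h1.trans h2
    exact_mod_cast h3
  set E := ENNReal.ofReal (Real.exp (-x)) with hE
  set G := {f : T → Bool | (∀ i, ∃ e ∈ S i, f e = true) ∧
             ((Finset.univ.filter fun e => f e = true).card : ℝ) ≤ 3 * x * t / q} with hG
  -- final numeric bound
  have hfinal : (k:ℝ≥0∞) * E + E ≤ 1 / (t : ℝ≥0∞) ^ a := by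
    rw [hE]
    have hkt0 : (0:ℝ) < (k:ℝ) * t := by linarith
    have hta : (0:ℝ) < (t:ℝ) ^ a := Real.rpow_pos_of_pos ht0 a
    have hrhs : 1 / (t : ℝ≥0∞) ^ a = ENNReal.ofReal (((t:ℝ) ^ a)⁻¹) := by
      rw [one_div, ← ENNReal.ofReal_natCast t, ENNReal.ofReal_rpow_of_pos ht0,
        ENNReal.ofReal_inv_of_pos hta]
    have hlhs : (k:ℝ≥0∞) * ENNReal.ofReal (Real.exp (-x)) + ENNReal.ofReal (Real.exp (-x))
        = ENNReal.ofReal (((k:ℝ) + 1) * Real.exp (-x)) := by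
      rw [← ENNReal.ofReal_natCast k, ← ENNReal.ofReal_mul (by positivity),
        ← ENNReal.ofReal_add (by positivity) (Real.exp_nonneg _), add_mul, one_mul]
    rw [hlhs, hrhs]
    apply ENNReal.ofReal_le_ofReal
    have hexp : Real.exp (-x) = (((k:ℝ)*t) ^ a)⁻¹ * (Real.exp 1)⁻¹ := by
      rw [hx, Real.rpow_def_of_pos hkt0, neg_add, Real.exp_add, ← Real.exp_neg, ← Real.exp_neg,
        mul_comm (Real.log _) a, Real.exp_neg]
    have hsplit : ((k:ℝ)*t) ^ a = (k:ℝ) ^ a * (t:ℝ) ^ a :=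
      Real.mul_rpow (by linarith) ht0.le
    have hka : (k:ℝ) ≤ (k:ℝ) ^ a := by
      calc (k:ℝ) = (k:ℝ) ^ (1:ℝ) := (Real.rpow_one _).symm
      _ ≤ _ := Real.rpow_le_rpow_of_exponent_le hk1 ha
    have he2 : (2:ℝ) ≤ Real.exp 1 := by
      have := Real.add_one_le_exp (1:ℝ); linarith
    have hka0 : (0:ℝ) < (k:ℝ) ^ a := Real.rpow_pos_of_pos (by linarith) a
    rw [hexp, hsplit]
    rw [mul_inv]
    have h1 : ((k:ℝ)+1) ≤ (k:ℝ)^a * Real.exp 1 := by nlinarith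
    have h2 : ((k:ℝ)+1) * (((k:ℝ)^a)⁻¹ * ((t:ℝ)^a)⁻¹ * (Real.exp 1)⁻¹)
        = (((k:ℝ)+1) / ((k:ℝ)^a * Real.exp 1)) * ((t:ℝ)^a)⁻¹ := by
      rw [div_eq_mul_inv, mul_inv]
      ring
    rw [h2]
    calc (((k:ℝ)+1) / ((k:ℝ)^a * Real.exp 1)) * ((t:ℝ)^a)⁻¹
        ≤ 1 * ((t:ℝ)^a)⁻¹ := by
          apply mul_le_mul_of_nonneg_right ((div_le_one (by positivity)).mpr h1) (by positivity)
      _ = ((t:ℝ)^a)⁻¹ := one_mul _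

  by_cases hcase : (q:ℝ) ≤ x
  · -- here p = 1 and the all-true function has measure 1
    have hp_one : p = 1 := by
      rw [hp, min_eq_right]
      exact ENNReal.one_le_ofReal.mpr ((le_div_iff₀ hq0).mpr (by linarith))
    have hmem : (fun _ : T => true) ∈ G := by
      constructor
      · intro i
        obtain ⟨e, he⟩ := Finset.card_pos.mp (lt_of_lt_of_le hq (hS i))
        exact ⟨e, he, rfl⟩
      · have : (Finset.univ.filter fun e : T => (true : Bool) = true) = Finset.univ := by
          simp
        rw [this]
        rw [Finset.card_univ, ← ht]
        rw [le_div_iff₀ hq0]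
        nlinarith
    have hone : (Measure.pi fun _ : T => ν) {(fun _ : T => true)} = 1 := by
      rw [hsingle]
      simp [hνt, hp_one]
    calc 1 - 1 / (t : ℝ≥0∞) ^ a ≤ 1 := tsub_le_self
      _ = (Measure.pi fun _ : T => ν) {(fun _ : T => true)} := hone.symm
      _ ≤ _ := measure_mono (Set.singleton_subset_iff.mpr hmem)
  · -- main case : p = x/q < 1
    push_neg at hcase
    have hxq0 : 0 ≤ x / q := by positivity
    have hxq1 : x / q < 1 := (div_lt_one hq0).mpr hcase
    have hp' : p = ENNReal.ofReal (x / q) := by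
      rw [hp, min_eq_left (le_of_lt (ENNReal.ofReal_lt_one.mpr hxq1))]
    have h1p : 1 - p = ENNReal.ofReal (1 - x / q) := by
      rw [hp', ENNReal.ofReal_sub _ hxq0, ENNReal.ofReal_one]
    -- B1 bound
    have hB1 : ∀ i, (Measure.pi fun _ : T => ν) {f : T → Bool | ¬ ∃ e ∈ S i, f e = true} ≤ E := by
      intro i
      have hsub : {f : T → Bool | ¬ ∃ e ∈ S i, f e = true} ⊆
          Set.univ.pi (fun e => if e ∈ S i then ({false} : Set Bool) else Set.univ) := by
        intro f hf e _
        by_cases he : e ∈ S i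
        · simp only [he, if_true, Set.mem_singleton_iff]
          cases hfe : f e
          · rfl
          · exact absurd ⟨e, he, hfe⟩ hf
        · simp [he]
      refine le_trans (measure_mono hsub) ?_
      rw [Measure.pi_pi]
      have hval : ∀ e : T, ν (if e ∈ S i then ({false} : Set Bool) else Set.univ)
          = if e ∈ S i then (1 - p) else 1 := by
        intro e; split
        · exact hνf
        · exact measure_univ
      rw [Finset.prod_congr rfl (fun e _ => hval e), Finset.prod_ite_mem,
        Finset.univ_inter, Finset.prod_const]
      calc (1-p)^(S i).card ≤ (1-p)^q :=
            pow_le_pow_of_le_one zero_le tsub_le_self (hS i)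
        _ ≤ E := by
            rw [h1p, ← ENNReal.ofReal_pow (by linarith), hE]
            apply ENNReal.ofReal_le_ofReal
            calc (1 - x/q)^q ≤ (Real.exp (-(x/q)))^q := by
                  apply pow_le_pow_left₀ (by linarith)
                  have := Real.add_one_le_exp (-(x/q)); linarith
              _ = Real.exp (-x) := by
                  rw [← Real.exp_nat_mul]; congr 1; field_simp
    -- B2 bound
    have hB2 : (Measure.pi fun _ : T => ν)
        {f : T → Bool | ¬ (((Finset.univ.filter fun e => f e = true).card : ℝ) ≤ 3 * x * t / q)}
        ≤ E := by
      set c := ENNReal.ofReal (Real.exp 1) with hc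
      set m : ℝ := 3 * x * t / q with hm
      set B2 := {f : T → Bool | ¬ (((Finset.univ.filter fun e => f e = true).card : ℝ) ≤ m)}
        with hB2s
      have key : ∀ f ∈ B2.toFinite.toFinset,
          (Measure.pi fun _ : T => ν) {f}
            ≤ ENNReal.ofReal (Real.exp (-m)) *
                ∏ e : T, ((if f e = true then c else 1) * ν {f e}) := by
        intro f hf
        have hXm : m < ((Finset.univ.filter fun e => f e = true).card : ℝ) := by
          have h5 := (Set.Finite.mem_toFinset _).mp hf
          rw [hB2s] at h5
          exact not_le.mp h5
        have hprod : ∏ e : T, ((if f e = true then c else 1) * ν {f e})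
            = c ^ (Finset.univ.filter fun e => f e = true).card *
                (Measure.pi fun _ : T => ν) {f} := by
          rw [Finset.prod_mul_distrib, hsingle f]
          congr 1
          rw [← Finset.prod_filter, Finset.prod_const]
        rw [hprod, ← mul_assoc]
        nth_rewrite 1 [← one_mul ((Measure.pi fun _ : T => ν) {f})]
        apply mul_le_mul_left
        rw [hc, ← ENNReal.ofReal_pow (Real.exp_nonneg 1), Real.exp_one_pow,
          ← ENNReal.ofReal_mul (Real.exp_nonneg _), ← Real.exp_add]
        rw [show (1:ℝ≥0∞) = ENNReal.ofReal (Real.exp 0) by simp]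
        exact ENNReal.ofReal_le_ofReal (Real.exp_le_exp.mpr (by linarith))
      have hbase : c * p + 1 * (1 - p)
          ≤ ENNReal.ofReal (Real.exp ((Real.exp 1 - 1) * (x/q))) := by
        rw [one_mul, hc, h1p, hp', ← ENNReal.ofReal_mul (Real.exp_nonneg 1),
          ← ENNReal.ofReal_add (by positivity) (by linarith)]
        apply ENNReal.ofReal_le_ofReal
        have h6 := Real.add_one_le_exp ((Real.exp 1 - 1) * (x/q))
        nlinarith
      have hxy : x ≤ x/q * t := by
        rw [div_mul_eq_mul_div, le_div_iff₀ hq0]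
        nlinarith
      have h2e : Real.exp 1 ≤ 3 := by nlinarith [Real.exp_one_lt_d9]
      calc (Measure.pi fun _ : T => ν) B2
          ≤ ∑ f ∈ B2.toFinite.toFinset, (Measure.pi fun _ : T => ν) {f} :=
            meas_le_sum' _ _
        _ ≤ ∑ f ∈ B2.toFinite.toFinset, ENNReal.ofReal (Real.exp (-m)) *
              ∏ e : T, ((if f e = true then c else 1) * ν {f e}) :=
            Finset.sum_le_sum key
        _ ≤ ∑ f : T → Bool, ENNReal.ofReal (Real.exp (-m)) *
              ∏ e : T, ((if f e = true then c else 1) * ν {f e}) :=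
            Finset.sum_le_sum_of_subset (Finset.subset_univ _)
        _ = ENNReal.ofReal (Real.exp (-m)) *
              ∑ f : T → Bool, ∏ e : T, ((if f e = true then c else 1) * ν {f e}) := by
            rw [← Finset.mul_sum]
        _ = ENNReal.ofReal (Real.exp (-m)) *
              (c * p + 1 * (1 - p)) ^ Fintype.card T := by
            rw [sum_prod_bool' (fun b => (if b = true then c else 1) * ν {b})]
            simp only [if_true, if_false, hνt, hνf]
            norm_num
        _ ≤ ENNReal.ofReal (Real.exp (-m)) *
              (ENNReal.ofReal (Real.exp ((Real.exp 1 - 1) * (x/q)))) ^ Fintype.card T :=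
            mul_le_mul_right (pow_le_pow_left' hbase _) _
        _ = ENNReal.ofReal (Real.exp (-m + (Fintype.card T : ℝ) * ((Real.exp 1 - 1) * (x/q)))) := by
            rw [← ENNReal.ofReal_pow (Real.exp_nonneg _), ← Real.exp_nat_mul,
              ← ENNReal.ofReal_mul (Real.exp_nonneg _), ← Real.exp_add]
        _ ≤ E := by
            rw [hE]
            apply ENNReal.ofReal_le_ofReal
            apply Real.exp_le_exp.mpr
            rw [← ht, hm, show 3*x*(t:ℝ)/q = 3*((x/q)*t) by ring]
            nlinarith [mul_nonneg hxq0 ht0.le]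
    -- union bound and conclusion
    have hcover : (1:ℝ≥0∞) ≤ (Measure.pi fun _ : T => ν) G + ((k:ℝ≥0∞) * E + E) := by
      set B1 : Fin k → Set (T → Bool) := fun i => {f : T → Bool | ¬ ∃ e ∈ S i, f e = true}
        with hB1s
      set B2 := {f : T → Bool |
          ¬ (((Finset.univ.filter fun e => f e = true).card : ℝ) ≤ 3 * x * t / q)} with hB2s
      have huniv : (Set.univ : Set (T → Bool)) ⊆ G ∪ ((⋃ i, B1 i) ∪ B2) := by
        intro f _
        by_cases h1 : ∀ i, ∃ e ∈ S i, f e = true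
        · by_cases h2 : ((Finset.univ.filter fun e => f e = true).card : ℝ) ≤ 3 * x * t / q
          · left; exact ⟨h1, h2⟩
          · right; right; exact h2
        · right; left
          obtain ⟨i, hi⟩ := not_forall.mp h1
          exact Set.mem_iUnion.mpr ⟨i, hi⟩
      have hsum : (Measure.pi fun _ : T => ν) ((⋃ i, B1 i) ∪ B2) ≤ (k:ℝ≥0∞) * E + E := by
        refine le_trans (measure_union_le _ _) (add_le_add ?_ hB2)
        refine le_trans (measure_iUnion_fintype_le _ _) ?_
        calc ∑ i : Fin k, (Measure.pi fun _ : T => ν) (B1 i)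
            ≤ ∑ _i : Fin k, E := Finset.sum_le_sum (fun i _ => hB1 i)
          _ = (k:ℝ≥0∞) * E := by
              rw [Finset.sum_const, Finset.card_univ, Fintype.card_fin, nsmul_eq_mul]
      calc (1:ℝ≥0∞) = (Measure.pi fun _ : T => ν) Set.univ := measure_univ.symm
        _ ≤ (Measure.pi fun _ : T => ν) (G ∪ ((⋃ i, B1 i) ∪ B2)) := measure_mono huniv
        _ ≤ (Measure.pi fun _ : T => ν) G + (Measure.pi fun _ : T => ν) ((⋃ i, B1 i) ∪ B2) :=
            measure_union_le _ _
        _ ≤ (Measure.pi fun _ : T => ν) G + ((k:ℝ≥0∞) * E + E) := add_le_add_right hsum _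
    rw [tsub_le_iff_right]
    exact le_trans hcover (add_le_add_right hfinal _)
end

section
/- Let G be a directed unweighted graph, let c_0, c_1, ..., c_{l+1} be nodes lying in this order on a shortest path in a graph G' (a supergraph of G obtained before some edge deletions), satisfying dist_{G'}(c_i, c_{i+2}) > 2n/c' for a parameter c' for all valid i. If i and j are indices with j ≥ i + 3, then the path unions P(c_i, c_{i+1}, n/c', G) and P(c_j, c_{j+1}, n/c', G) are disjoint, where P(x, y, D, G) is the set of nodes on some x-to-y path in G of length at most D. -/
open scoped ENNReal

namespace Paper

variable {V : Type*}

theorem pathWeight_mono (w w' : V → V → ℝ≥0∞) (hle : ∀ u v, w' u v ≤ w u v) :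
    ∀ p : List V, pathWeight w' p ≤ pathWeight w p
  | [] => le_rfl
  | [_] => le_rfl
  | a :: b :: rest => by
      simp only [pathWeight]
      exact add_le_add (hle a b) (pathWeight_mono w w' hle (b :: rest))

theorem pathWeight_split (w : V → V → ℝ≥0∞) :
    ∀ (xs : List V) (v : V) (ys : List V),
      pathWeight w (xs ++ v :: ys) = pathWeight w (xs ++ [v]) + pathWeight w (v :: ys)
  | [], v, ys => by cases ys <;> simp [pathWeight]
  | [a], v, ys => by cases ys <;> simp [pathWeight, add_assoc]
  | a :: b :: rest, v, ys => by
      have ih := pathWeight_split w (b :: rest) v ys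
      simp only [List.cons_append, List.append_eq, pathWeight] at ih ⊢
      rw [ih, add_assoc]

end Paper

/-- disjointness of path unions: if the centers `c_0, …, c_{l+1}` lie in
order on a shortest path of `G'`, consecutive-but-one centers are far apart in `G'`, and
`G` results from `G'` by edge deletions, then for `j ≥ i + 3` the path unions
`P(c_i, c_{i+1}, n/c', G)` and `P(c_j, c_{j+1}, n/c', G)` are disjoint. -/
theorem stmt8 {V : Type*} (w w' : V → V → ℝ≥0∞)
    (hunw : ∀ u v, w' u v = 1 ∨ w' u v = ⊤)
    (hdel : ∀ u v, w u v = w' u v ∨ w u v = ⊤)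
    (n : ℕ) (c' : ℝ≥0∞) (l : ℕ) (c : ℕ → V)
    (horder : ∀ i j m, i ≤ j → j ≤ m → m ≤ l + 1 →
      Paper.gdist w' (c i) (c m) =
        Paper.gdist w' (c i) (c j) + Paper.gdist w' (c j) (c m))
    (hsep : ∀ i, i + 2 ≤ l + 1 →
      2 * ((n : ℝ≥0∞) / c') < Paper.gdist w' (c i) (c (i + 2)))
    (i j : ℕ) (hij : i + 3 ≤ j) (hj : j + 1 ≤ l + 1) :
    Paper.pathUnion w (c i) (c (i + 1)) ((n : ℝ≥0∞) / c') ∩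
      Paper.pathUnion w (c j) (c (j + 1)) ((n : ℝ≥0∞) / c') = ∅ := by
  set D : ℝ≥0∞ := (n : ℝ≥0∞) / c' with hD
  by_contra hne
  obtain ⟨v, hv1, hv2⟩ := Set.nonempty_iff_ne_empty.2 hne
  obtain ⟨p, hp, hpw, hvp⟩ := hv1
  obtain ⟨q, hq, hqw, hvq⟩ := hv2
  -- split paths at v
  obtain ⟨p₁, p₂, rfl⟩ := List.append_of_mem hvp
  obtain ⟨q₁, q₂, rfl⟩ := List.append_of_mem hvq
  have hle : ∀ u u', w' u u' ≤ w u u' := by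
    intro u u'
    rcases hdel u u' with h | h
    · rw [h]
    · rw [h]; exact le_top
  -- the combined path from c i to c (j+1)
  set r : List V := p₁ ++ v :: q₂ with hr
  have hrpath : Paper.IsPath (c i) (c (j + 1)) r := by
    obtain ⟨hpne, hph, hpl⟩ := hp
    obtain ⟨hqne, hqh, hql⟩ := hq
    refine ⟨by simp [hr], ?_, ?_⟩
    · cases p₁ <;> simpa [hr] using hph
    · rw [hr, List.getLast?_append_cons]
      rwa [List.getLast?_append_cons] at hql
  have hrw : Paper.pathWeight w r ≤ D + D := by
    rw [hr, Paper.pathWeight_split]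
    refine add_le_add ?_ ?_
    · calc Paper.pathWeight w (p₁ ++ [v])
          ≤ Paper.pathWeight w (p₁ ++ [v]) + Paper.pathWeight w (v :: p₂) := le_self_add
        _ = Paper.pathWeight w (p₁ ++ v :: p₂) := (Paper.pathWeight_split w p₁ v p₂).symm
        _ ≤ D := hpw
    · calc Paper.pathWeight w (v :: q₂)
          ≤ Paper.pathWeight w (q₁ ++ [v]) + Paper.pathWeight w (v :: q₂) := le_add_self
        _ = Paper.pathWeight w (q₁ ++ v :: q₂) := (Paper.pathWeight_split w q₁ v q₂).symm
        _ ≤ D := hqw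
  have hub : Paper.gdist w' (c i) (c (j + 1)) ≤ D + D := by
    refine le_trans (sInf_le ⟨r, hrpath, rfl⟩) ?_
    exact le_trans (Paper.pathWeight_mono w w' hle r) hrw
  have hlb : 2 * D < Paper.gdist w' (c i) (c (j + 1)) := by
    have h2 : i + 2 ≤ l + 1 := by omega
    have := horder i (i + 2) (j + 1) (by omega) (by omega) hj
    calc 2 * D < Paper.gdist w' (c i) (c (i + 2)) := hsep i h2
    _ ≤ Paper.gdist w' (c i) (c (i + 2)) + Paper.gdist w' (c (i + 2)) (c (j + 1)) :=
        le_self_add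
    _ = Paper.gdist w' (c i) (c (j + 1)) := this.symm
  rw [two_mul] at hlb
  exact absurd hub (not_le.2 hlb)
end

section
/- Let G be a weighted directed graph, let h ≥ 1, r ≥ 0, α ≥ 1, 0 < ε ≤ 1, and let Q ⊆ V be a set of nodes containing the h-hop path union P^h(x, y, α(1+ε)^r, G). Then P^h(x, y, α(1+ε)^r, G) ⊆ P(x, y, α(1+ε)^{r+1}, G̃^{h,r}[Q]), where G̃^{h,r} rounds each edge weight up to the next multiple of ε(1+ε)^r/h. -/
open scoped ENNReal

lemma pw_induced {V : Type*} (wr : V → V → ℝ≥0∞) (Q : Set V) :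
    ∀ p : List V, (∀ v ∈ p, v ∈ Q) →
      Paper.pathWeight (Paper.inducedW wr Q) p = Paper.pathWeight wr p
  | [], _ => rfl
  | [_], _ => rfl
  | a :: b :: rest, hmem => by
    have ha : a ∈ Q := hmem a (by simp)
    have hb : b ∈ Q := hmem b (by simp)
    simp only [Paper.pathWeight]
    rw [pw_induced wr Q (b :: rest) (fun v hv => hmem v (List.mem_cons_of_mem _ hv))]
    congr 1
    simp [Paper.inducedW, ha, hb]

lemma pw_le {V : Type*} (w wr : V → V → ℝ≥0∞) (δ : ℝ≥0∞)
    (hle : ∀ u v, wr u v ≤ w u v + δ) :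
    ∀ p : List V, Paper.pathWeight wr p ≤
      Paper.pathWeight w p + ((p.length - 1 : ℕ) : ℝ≥0∞) * δ
  | [] => by simp [Paper.pathWeight]
  | [_] => by simp [Paper.pathWeight]
  | a :: b :: rest => by
    have ih := pw_le w wr δ hle (b :: rest)
    simp only [Paper.pathWeight, List.length_cons] at *
    calc wr a b + Paper.pathWeight wr (b :: rest)
        ≤ (w a b + δ) + (Paper.pathWeight w (b :: rest)
            + ((rest.length + 1 - 1 : ℕ) : ℝ≥0∞) * δ) :=
          add_le_add (hle a b) ih
      _ = (w a b + Paper.pathWeight w (b :: rest))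
            + ((rest.length + 1 + 1 - 1 : ℕ) : ℝ≥0∞) * δ := by
          simp only [Nat.add_sub_cancel]
          push_cast
          ring

/-- if `Q` contains the `h`-hop path union `P^h(x, y, α(1+ε)^r, G)`, then
`P^h(x, y, α(1+ε)^r, G) ⊆ P(x, y, α(1+ε)^{r+1}, G̃^{h,r}[Q])`. -/
theorem stmt12 {V : Type*} (w wr : V → V → ℝ≥0∞)
    (ε : ℝ) (hε0 : 0 < ε) (hε1 : ε ≤ 1) (h : ℕ) (hh : 1 ≤ h) (r : ℕ)
    (α : ℝ) (hα : 1 ≤ α)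
    (δ : ℝ≥0∞) (hδ : δ = ENNReal.ofReal (ε * (1 + ε) ^ r / h))
    (hround : ∀ u v, (w u v = ⊤ ∧ wr u v = ⊤) ∨
      ∃ m : ℕ, wr u v = m * δ ∧ w u v ≤ wr u v ∧ wr u v < w u v + δ)
    (x y : V) (Q : Set V)
    (hQ : Paper.hopPathUnion w h x y (ENNReal.ofReal (α * (1 + ε) ^ r)) ⊆ Q) :
    Paper.hopPathUnion w h x y (ENNReal.ofReal (α * (1 + ε) ^ r)) ⊆
      Paper.pathUnion (Paper.inducedW wr Q) x y
        (ENNReal.ofReal (α * (1 + ε) ^ (r + 1))) := by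
  intro v hv
  obtain ⟨p, hp, hlen, hw, hvp⟩ := hv
  refine ⟨p, hp, ?_, hvp⟩
  -- all vertices of p are in Q
  have hmem : ∀ u ∈ p, u ∈ Q := fun u hu => hQ ⟨p, hp, hlen, hw, hu⟩
  rw [pw_induced wr Q p hmem]
  -- wr ≤ w + δ everywhere
  have hle : ∀ u' v', wr u' v' ≤ w u' v' + δ := by
    intro u' v'
    rcases hround u' v' with ⟨h1, h2⟩ | ⟨m, _, _, h3⟩
    · simp [h1, h2]
    · exact h3.le
  have key := pw_le w wr δ hle p
  have hlen' : ((p.length - 1 : ℕ) : ℝ≥0∞) ≤ (h : ℝ≥0∞) := by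
    exact_mod_cast Nat.sub_le_of_le_add (by omega)
  have hhδ : (h : ℝ≥0∞) * δ = ENNReal.ofReal (ε * (1 + ε) ^ r) := by
    have hh0 : (0:ℝ) < h := by exact_mod_cast hh
    rw [hδ, ← ENNReal.ofReal_natCast, ← ENNReal.ofReal_mul (by positivity)]
    congr 1
    field_simp
  have hpos : (0:ℝ) < 1 + ε := by linarith
  calc Paper.pathWeight wr p
      ≤ Paper.pathWeight w p + ((p.length - 1 : ℕ) : ℝ≥0∞) * δ := key
    _ ≤ ENNReal.ofReal (α * (1 + ε) ^ r) + (h : ℝ≥0∞) * δ :=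
        add_le_add hw (mul_le_mul_left hlen' δ)
    _ = ENNReal.ofReal (α * (1 + ε) ^ r) + ENNReal.ofReal (ε * (1 + ε) ^ r) := by
        rw [hhδ]
    _ = ENNReal.ofReal (α * (1 + ε) ^ r + ε * (1 + ε) ^ r) := by
        rw [ENNReal.ofReal_add (by positivity) (by positivity)]
    _ ≤ ENNReal.ofReal (α * (1 + ε) ^ (r + 1)) := by
        apply ENNReal.ofReal_le_ofReal
        have hp0 : (0:ℝ) ≤ (1 + ε) ^ r := by positivity
        have : α + ε ≤ α * (1 + ε) := by nlinarith
        calc α * (1 + ε) ^ r + ε * (1 + ε) ^ r = (α + ε) * (1 + ε) ^ r := by ring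
          _ ≤ α * (1 + ε) * (1 + ε) ^ r := by nlinarith
          _ = α * (1 + ε) ^ (r + 1) := by ring
end

section
/- In the approximate path union procedure: suppose R(x) ⊆ V satisfies the invariant that every node v with dist_G(x, v) ≤ h belongs to R(x). Define B_i = {v ∈ R(x) : dist_{G[R(x)]}(v, y) ≤ i·h}, and F = {v ∈ B_{i*} : dist_{G[B_{i*}]}(x, v) ≤ h} for some index i* ≥ 2. Then every node v ∈ B_{i*−1} \ F satisfies dist_G(x, v) > h. -/
open scoped ENNReal

namespace Paper

variable {V : Type*}

lemma pathWeight_cons_cons (w : V → V → ℝ≥0∞) (a b : V) (l : List V) :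
    pathWeight w (a :: b :: l) = w a b + pathWeight w (b :: l) := rfl

lemma pathWeight_append (w : V → V → ℝ≥0∞) (l1 : List V) (a : V) (l2 : List V) :
    pathWeight w (l1 ++ a :: l2) = pathWeight w (l1 ++ [a]) + pathWeight w (a :: l2) := by
  induction l1 with
  | nil => simp [pathWeight]
  | cons b l1 ih =>
    cases l1 with
    | nil =>
      simp only [List.cons_append, List.nil_append, pathWeight_cons_cons]
      simp [pathWeight, add_assoc]
    | cons c l1' =>
      simp only [List.cons_append, pathWeight_cons_cons] at *
      rw [ih, add_assoc]

lemma pathWeight_nat (w : V → V → ℝ≥0∞) (hunw : ∀ u u' : V, w u u' = 1 ∨ w u u' = ⊤) :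
    ∀ p : List V, (∃ m : ℕ, pathWeight w p = m) ∨ pathWeight w p = ⊤ := by
  intro p
  induction p with
  | nil => exact Or.inl ⟨0, by simp [pathWeight]⟩
  | cons a p ih =>
    cases p with
    | nil => exact Or.inl ⟨0, by simp [pathWeight]⟩
    | cons b q =>
      rw [pathWeight_cons_cons]
      rcases hunw a b with h1 | h1
      · rcases ih with ⟨m, hm⟩ | hm
        · exact Or.inl ⟨m + 1, by rw [h1, hm]; push_cast; ring⟩
        · exact Or.inr (by rw [hm]; simp)
      · exact Or.inr (by rw [h1]; simp)

lemma gdist_le_pathWeight (w : V → V → ℝ≥0∞) {a b : V} {p : List V} (hp : IsPath a b p) :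
    gdist w a b ≤ pathWeight w p :=
  sInf_le ⟨p, hp, rfl⟩

lemma gdist_attained (w : V → V → ℝ≥0∞) (hunw : ∀ u u' : V, w u u' = 1 ∨ w u u' = ⊤)
    {a b : V} {n : ℕ} (hd : gdist w a b ≤ (n : ℝ≥0∞)) :
    ∃ p, IsPath a b p ∧ pathWeight w p ≤ (n : ℝ≥0∞) := by
  have h1 : gdist w a b < (n : ℝ≥0∞) + 1 :=
    lt_of_le_of_lt hd (ENNReal.lt_add_right (by simp) one_ne_zero)
  rw [gdist, sInf_lt_iff] at h1
  obtain ⟨c, ⟨p, hp, hpc⟩, hc⟩ := h1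
  refine ⟨p, hp, ?_⟩
  rcases pathWeight_nat w hunw p with ⟨m, hm⟩ | hm
  · rw [hm]
    rw [← hpc, hm] at hc
    have h2 : (m : ℝ≥0∞) < ((n + 1 : ℕ) : ℝ≥0∞) := by push_cast; exact hc
    rw [Nat.cast_lt] at h2
    exact Nat.cast_le.mpr (by omega)
  · rw [← hpc, hm] at hc; simp at hc

lemma gdist_concat (w : V → V → ℝ≥0∞) {a b c : V} {p q : List V}
    (hp : IsPath a b p) (hq : IsPath b c q) :
    gdist w a c ≤ pathWeight w p + pathWeight w q := by
  obtain ⟨l', hl'⟩ := List.getLast?_eq_some_iff.mp hp.2.2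
  obtain ⟨t, ht⟩ : ∃ t, q = b :: t := by
    cases q with
    | nil => exact absurd hq.2.1 (by simp)
    | cons z t =>
      have hz : z = b := by simpa using hq.2.1
      exact ⟨t, by rw [hz]⟩
  have hpath : IsPath a c (l' ++ b :: t) := by
    refine ⟨by simp, ?_, ?_⟩
    · have : l' ++ b :: t = p ++ t := by rw [hl']; simp
      rw [this, List.head?_append, hp.2.1]; rfl
    · rw [List.getLast?_append, ← ht, hq.2.2]; rfl
  calc gdist w a c ≤ pathWeight w (l' ++ b :: t) := gdist_le_pathWeight w hpath
    _ = pathWeight w p + pathWeight w q := by rw [pathWeight_append, ← hl', ← ht]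

lemma pathWeight_induced (w : V → V → ℝ≥0∞) (Q : Set V) :
    ∀ p : List V, (∀ u ∈ p, u ∈ Q) → pathWeight (inducedW w Q) p = pathWeight w p := by
  intro p
  induction p with
  | nil => intro _; rfl
  | cons a p ih =>
    intro hmem
    cases p with
    | nil => rfl
    | cons b q =>
      rw [pathWeight_cons_cons, pathWeight_cons_cons, ih (fun u hu => hmem u (by simp [hu]))]
      have ha : a ∈ Q := hmem a (by simp)
      have hb : b ∈ Q := hmem b (by simp)
      rw [inducedW, if_pos ⟨ha, hb⟩]

lemma inducedW_unw (w : V → V → ℝ≥0∞) (Q : Set V)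
    (hunw : ∀ u u' : V, w u u' = 1 ∨ w u u' = ⊤) :
    ∀ u u' : V, inducedW w Q u u' = 1 ∨ inducedW w Q u u' = ⊤ := by
  intro u u'
  rw [inducedW]
  by_cases hm : u ∈ Q ∧ u' ∈ Q
  · rw [if_pos hm]; exact hunw u u'
  · rw [if_neg hm]; exact Or.inr rfl

end Paper

/-- approximate path union, removal is safe: with
`R ⊇ {v : dist_G(x,v) ≤ h}`, `B_i = {v ∈ R : dist_{G[R]}(v,y) ≤ i·h}` and
`F = {v ∈ B_{i*} : dist_{G[B_{i*}]}(x,v) ≤ h}`, every `v ∈ B_{i*−1} \ F` has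
`dist_G(x,v) > h`. -/
theorem stmt13 {V : Type*} [Fintype V] (w : V → V → ℝ≥0∞)
    (hunw : ∀ u u' : V, w u u' = 1 ∨ w u u' = ⊤)
    (h : ℕ) (hh : 1 ≤ h) (istar : ℕ) (histar : 2 ≤ istar)
    (x y : V) (R B B' F : Set V)
    (hR : ∀ v, Paper.gdist w x v ≤ (h : ℝ≥0∞) → v ∈ R)
    (hB : B = {v | v ∈ R ∧
      Paper.gdist (Paper.inducedW w R) v y ≤ ((istar * h : ℕ) : ℝ≥0∞)})
    (hB' : B' = {v | v ∈ R ∧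
      Paper.gdist (Paper.inducedW w R) v y ≤ (((istar - 1) * h : ℕ) : ℝ≥0∞)})
    (hF : F = {v | v ∈ B ∧ Paper.gdist (Paper.inducedW w B) x v ≤ (h : ℝ≥0∞)})
    (v : V) (hv : v ∈ B' \ F) :
    (h : ℝ≥0∞) < Paper.gdist w x v := by
  by_contra hcon
  push_neg at hcon
  obtain ⟨p, hp, hpw⟩ := Paper.gdist_attained w hunw hcon
  -- every node of p is within distance h of x, hence in R
  have hmemR : ∀ u ∈ p, u ∈ R := by
    intro u hu
    obtain ⟨s, t, hst⟩ := List.append_of_mem hu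
    apply hR
    have hpre : Paper.IsPath x u (s ++ [u]) := by
      refine ⟨by simp, ?_, by simp⟩
      have h1 := hp.2.1
      rw [hst, List.head?_append] at h1
      rw [List.head?_append]
      cases s <;> simpa using h1
    have hle : Paper.pathWeight w (s ++ [u]) ≤ Paper.pathWeight w p := by
      rw [hst, Paper.pathWeight_append w s u t]
      exact le_add_right le_rfl
    exact (Paper.gdist_le_pathWeight w hpre).trans (hle.trans hpw)
  -- distance from v to y in G[R]
  have hvB' : v ∈ R ∧ Paper.gdist (Paper.inducedW w R) v y ≤ (((istar - 1) * h : ℕ) : ℝ≥0∞) := by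
    have := hv.1; rw [hB'] at this; exact this
  obtain ⟨q, hq, hqw⟩ := Paper.gdist_attained (Paper.inducedW w R)
    (Paper.inducedW_unw w R hunw) hvB'.2
  -- every node of p is in B
  have hmemB : ∀ u ∈ p, u ∈ B := by
    intro u hu
    obtain ⟨s, t, hst⟩ := List.append_of_mem hu
    have hsuf : Paper.IsPath u v (u :: t) := by
      refine ⟨by simp, rfl, ?_⟩
      have h2 := hp.2.2
      rw [hst, List.getLast?_append] at h2
      simpa using h2
    have hsufw : Paper.pathWeight w (u :: t) ≤ (h : ℝ≥0∞) := by
      have : Paper.pathWeight w (u :: t) ≤ Paper.pathWeight w p := by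
        rw [hst, Paper.pathWeight_append]; exact le_add_self
      exact this.trans hpw
    have hsufmem : ∀ z ∈ (u :: t), z ∈ R := by
      intro z hz
      apply hmemR z
      rw [hst]
      simp only [List.mem_cons] at hz
      simp only [List.mem_append, List.mem_cons]
      tauto
    have hsufR : Paper.IsPath u v (u :: t) := hsuf
    have key : Paper.gdist (Paper.inducedW w R) u y ≤ ((istar * h : ℕ) : ℝ≥0∞) := by
      have htri := Paper.gdist_concat (Paper.inducedW w R) hsufR hq
      rw [Paper.pathWeight_induced w R (u :: t) hsufmem] at htri
      have harith : (h : ℝ≥0∞) + (((istar - 1) * h : ℕ) : ℝ≥0∞) = ((istar * h : ℕ) : ℝ≥0∞) := by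
        obtain ⟨k, rfl⟩ : ∃ k, istar = k + 2 := ⟨istar - 2, by omega⟩
        have e : h + (k + 2 - 1) * h = (k + 2) * h := by
          have : k + 2 - 1 = k + 1 := by omega
          rw [this]; ring
        push_cast [← e]; ring
      calc Paper.gdist (Paper.inducedW w R) u y
          ≤ Paper.pathWeight w (u :: t) + Paper.pathWeight (Paper.inducedW w R) q := htri
        _ ≤ (h : ℝ≥0∞) + (((istar - 1) * h : ℕ) : ℝ≥0∞) := add_le_add hsufw hqw
        _ = ((istar * h : ℕ) : ℝ≥0∞) := harith
    rw [hB]; exact ⟨hmemR u hu, key⟩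
  -- v is in p
  have hvp : v ∈ p := by
    obtain ⟨l', hl'⟩ := List.getLast?_eq_some_iff.mp hp.2.2
    rw [hl']; simp
  -- conclude v ∈ F
  have hvF : v ∈ F := by
    rw [hF]
    refine ⟨hmemB v hvp, ?_⟩
    have hw : Paper.pathWeight (Paper.inducedW w B) p = Paper.pathWeight w p :=
      Paper.pathWeight_induced w B p hmemB
    exact (Paper.gdist_le_pathWeight (Paper.inducedW w B) hp).trans (hw.le.trans hpw)
  exact hv.2 hvF
end

section
/- Let H be a directed graph (the 'center graph') whose nodes are a subset C of the nodes of a directed graph G and which contains the edge (u, v) exactly when dist_G(u, v) ≤ D. Suppose s, t ∈ C and suppose that on every shortest path in G any two 'consecutive' centers are at distance at most D (formally: for every s-t path π in G there is a sequence of centers c_1 = s, c_2, ..., c_k = t on π, appearing in order, with dist_G(c_i, c_{i+1}) ≤ D for all i). Then s can reach t in H if and only if s can reach t in G. -/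
open scoped ENNReal

open Classical in
private lemma stmt15_aux1 {V : Type*} (E : V → V → Prop) (w : V → V → ℝ≥0∞)
    (hw : ∀ u v, w u v = if E u v then 1 else ⊤) :
    ∀ (p : List V) (x y : V), p.head? = some x → p.getLast? = some y →
      Paper.pathWeight w p ≠ ⊤ → Relation.ReflTransGen E x y := by
  intro p
  induction p with
  | nil => simp
  | cons a rest ih =>
    cases rest with
    | nil =>
      intro x y hx hy _
      simp only [List.head?_cons, Option.some.injEq] at hx
      simp only [List.getLast?_singleton, Option.some.injEq] at hy
      subst hx; subst hy; exact .refl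
    | cons b rest' =>
      intro x y hx hy hne
      simp only [List.head?_cons, Option.some.injEq] at hx
      subst hx
      rw [Paper.pathWeight] at hne
      have h1 : w a b ≠ ⊤ := fun h => hne (by simp [h])
      have h2 : Paper.pathWeight w (b :: rest') ≠ ⊤ := fun h => hne (by simp [h])
      have hE : E a b := by
        by_contra h
        rw [hw] at h1; simp [h] at h1
      have htail : Relation.ReflTransGen E b y := by
        refine ih b y (by simp) ?_ h2
        rw [← hy, List.getLast?_cons_cons]
      exact Relation.ReflTransGen.head hE htail

open Classical in
private lemma stmt15_aux2 {V : Type*} (E : V → V → Prop) (w : V → V → ℝ≥0∞)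
    (hw : ∀ u v, w u v = if E u v then 1 else ⊤) (D : ℕ) {x y : V}
    (h : Paper.gdist w x y ≤ (D : ℝ≥0∞)) : Relation.ReflTransGen E x y := by
  have hlt : Paper.gdist w x y < ⊤ := lt_of_le_of_lt h (ENNReal.natCast_lt_top D)
  rw [Paper.gdist, sInf_lt_iff] at hlt
  obtain ⟨c, ⟨p, ⟨hne, hx, hy⟩, hwp⟩, hc⟩ := hlt
  exact stmt15_aux1 E w hw p x y hx hy (by rw [hwp]; exact hc.ne)

private lemma stmt15_aux3 {V : Type*} (E : V → V → Prop) {s t : V}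
    (h : Relation.ReflTransGen E s t) :
    ∃ p : List V, p.Chain' E ∧ p.head? = some s ∧ p.getLast? = some t := by
  induction h with
  | refl => exact ⟨[s], List.isChain_singleton s, by simp, by simp⟩
  | @tail b c _ hbc ih =>
    obtain ⟨p, hch, hh, hl⟩ := ih
    refine ⟨p ++ [c], ?_, ?_, by simp⟩
    · show List.IsChain E (p ++ [c]); rw [List.isChain_append]
      refine ⟨hch, by simp, ?_⟩
      intro x hx y hy
      simp only [List.head?_cons, Option.mem_def, Option.some.injEq] at hy
      rw [hl] at hx
      simp only [Option.mem_def, Option.some.injEq] at hx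
      subst hx; subst hy
      exact hbc
    · cases p with
      | nil => simp at hl
      | cons a q => simpa using hh

open Classical in
/-- center graph preserves `s`-`t` reachability: the center graph `H` on
`C` has an edge `(u,v)` iff `dist_G(u,v) ≤ D`; assuming every `s`-`t` path of `G` carries a
sequence of centers with consecutive distances at most `D`, `s` reaches `t` in `H` iff `s`
reaches `t` in `G`. -/
theorem stmt15 {V : Type*} (E : V → V → Prop) (C : Set V) (s t : V)
    (hs : s ∈ C) (ht : t ∈ C) (D : ℕ) (hD : 1 ≤ D)
    (w : V → V → ℝ≥0∞) (hw : ∀ u v, w u v = if E u v then 1 else ⊤)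
    (hcover : ∀ p : List V, p.Chain' E → p.head? = some s → p.getLast? = some t →
      ∃ (k : ℕ) (c : ℕ → V), c 0 = s ∧ c k = t ∧ (∀ i ≤ k, c i ∈ C ∧ c i ∈ p) ∧
        ∀ i < k, Paper.gdist w (c i) (c (i + 1)) ≤ (D : ℝ≥0∞)) :
    Relation.ReflTransGen
        (fun u v : {z // z ∈ C} => Paper.gdist w (u : V) (v : V) ≤ (D : ℝ≥0∞))
        ⟨s, hs⟩ ⟨t, ht⟩ ↔
      Relation.ReflTransGen E s t := by
  constructor
  · intro h
    have key : ∀ (a b : {z // z ∈ C}),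
        Relation.ReflTransGen
          (fun u v : {z // z ∈ C} => Paper.gdist w (u : V) (v : V) ≤ (D : ℝ≥0∞)) a b →
        Relation.ReflTransGen E (a : V) (b : V) := by
      intro a b hab
      induction hab with
      | refl => exact .refl
      | tail _ hbc ih => exact ih.trans (stmt15_aux2 E w hw D hbc)
    exact key _ _ h
  · intro h
    obtain ⟨p, hch, hh, hl⟩ := stmt15_aux3 E h
    obtain ⟨k, c, hc0, hck, hmem, hdist⟩ := hcover p hch hh hl
    have key : ∀ i, ∀ hi : i ≤ k, Relation.ReflTransGen
        (fun u v : {z // z ∈ C} => Paper.gdist w (u : V) (v : V) ≤ (D : ℝ≥0∞))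
        ⟨c 0, hc0 ▸ hs⟩ ⟨c i, (hmem i hi).1⟩ := by
      intro i
      induction i with
      | zero => intro _; exact .refl
      | succ n ihn =>
        intro hi
        exact (ihn (Nat.le_of_succ_le hi)).tail (hdist n (Nat.lt_of_succ_le hi))
    have := key k le_rfl
    convert this using 2 <;> simp [hc0, hck]
end
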